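/- Let x be a Huffman sequence of length L with energy E > 2, and h ∈ ℂ^K with h_0 ≠ 0 ≠ h_{K-1}, with L = 2K + M for some M ≥ 0. Then the autocorrelation of y = x * h has the block form a_y = (-a_h, 0_M, E·a_h, 0_M, -a_h), i.e., the first 2K-1 entries of a_y equal -a_h, so the channel autocorrelation a_h is recovered exactly from a_y, and E = ‖(a_y entries L-1,...,L+2K-3)‖₂ / ‖(a_y entries 0,...,2K-2)‖₂. -/

import Mathlib

open Complex Finset

/-- Zero-padded extension of a finite vector to an ℕ-indexed sequence. -/
noncomputable def pad {L : ℕ} (x : Fin L → ℂ) : ℕ → ℂ :=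
  fun n => if h : n < L then x ⟨n, h⟩ else 0

/-- Aperiodic (linear) convolution of ℕ-indexed sequences. -/
noncomputable def aconv (f g : ℕ → ℂ) : ℕ → ℂ :=
  fun k => ∑ l ∈ Finset.range (k + 1), f l * g (k - l)

/-- Conjugate time-reversal of a vector: (crev x) k = conj (x (L-1-k)). -/
noncomputable def crev {L : ℕ} (x : Fin L → ℂ) : Fin L → ℂ :=
  fun k => star (x k.rev)

/-- Aperiodic autocorrelation a = x * conj(x⁻). -/
noncomputable def acorr {L : ℕ} (x : Fin L → ℂ) : ℕ → ℂ :=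
  aconv (pad x) (pad (crev x))

/-!
Autocorrelation turns convolution into convolution: reading vectors as polynomials, the
conjugate reversal of `y = x * h` (taken at the full length `L + K - 1`) is the product of the
conjugate reversals of `x` and `h`, so `a_y = a_x * a_h`. The Huffman autocorrelation `a_x` is
three spikes, at lags `0`, `L - 1` and `2L - 2`, so `a_y` is the sum of the three shifted copies
`-a_h`, `E a_h`, `-a_h`. These do not overlap because `a_h` lives on lags `0, …, 2K - 2` and
`L - 1 ≥ 2K - 1`. The second block is `E` times the first, which is nonzero since `a_h` at lag
`K - 1` is the energy of `h`.
-/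

open Polynomial

noncomputable def toPoly {A : ℕ} (f : Fin A → ℂ) : ℂ[X] :=
  ∑ i : Fin A, monomial (i : ℕ) (f i)

noncomputable def conv {A B : ℕ} (f : Fin A → ℂ) (g : Fin B → ℂ) : Fin (A + B - 1) → ℂ :=
  fun j => aconv (pad f) (pad g) j

lemma aconv_coeff (p q : ℂ[X]) : aconv p.coeff q.coeff = (p * q).coeff := by
  funext n
  rw [coeff_mul, Nat.sum_antidiagonal_eq_sum_range_succ_mk]
  rfl

lemma aconv_add_left (f₁ f₂ g : ℕ → ℂ) : aconv (f₁ + f₂) g = aconv f₁ g + aconv f₂ g := by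
  funext k
  simp only [aconv, Pi.add_apply, add_mul, sum_add_distrib]

lemma aconv_spike_left (n : ℕ) (c : ℂ) (g : ℕ → ℂ) (k : ℕ) :
    aconv (fun l => if l = n then c else 0) g k = if n ≤ k then c * g (k - n) else 0 := by
  simp [aconv, ite_mul]

section

variable {A B : ℕ}

lemma pad_eq_coeff_toPoly (f : Fin A → ℂ) : pad f = (toPoly f).coeff := by
  funext n
  simp only [toPoly, finsetSum_coeff, coeff_monomial, pad]
  split_ifs with hn
  · rw [sum_eq_single ⟨n, hn⟩ (fun i _ hi => if_neg fun h => hi (Fin.ext h)) (by simp),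
      if_pos rfl]
  · exact (sum_eq_zero fun i _ => if_neg (by omega)).symm

lemma natDegree_toPoly_le (f : Fin A → ℂ) : (toPoly f).natDegree ≤ A - 1 :=
  natDegree_le_iff_coeff_eq_zero.mpr fun n hn => by
    rw [← pad_eq_coeff_toPoly, pad, dif_neg (by omega)]

lemma aconv_pad (f : Fin A → ℂ) (g : Fin B → ℂ) :
    aconv (pad f) (pad g) = (toPoly f * toPoly g).coeff := by
  rw [pad_eq_coeff_toPoly, pad_eq_coeff_toPoly, aconv_coeff]

lemma acorr_eq_coeff (f : Fin A → ℂ) : acorr f = (toPoly f * toPoly (crev f)).coeff :=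
  aconv_pad f (crev f)

lemma aconv_pad_eq_zero (f : Fin A → ℂ) (g : Fin B → ℂ) {n : ℕ} (hn : A + B - 1 ≤ n) :
    aconv (pad f) (pad g) n = 0 :=
  sum_eq_zero fun l hl => by
    rw [mem_range] at hl
    unfold pad
    split_ifs <;> first | omega | simp

lemma toPoly_conv (f : Fin A → ℂ) (g : Fin B → ℂ) :
    toPoly (conv f g) = toPoly f * toPoly g := by
  ext n
  rw [← pad_eq_coeff_toPoly, ← aconv_pad, pad]
  split_ifs with hn
  · rfl
  · exact (aconv_pad_eq_zero f g (by omega)).symm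

-- `reflect` at the fixed length `A - 1`, unlike `reverse`, needs no nonzero last entry.
lemma toPoly_crev (f : Fin A → ℂ) :
    toPoly (crev f) = reflect (A - 1) ((toPoly f).map (starRingEnd ℂ)) := by
  ext n
  rw [coeff_reflect, coeff_map, ← pad_eq_coeff_toPoly, ← pad_eq_coeff_toPoly]
  by_cases hn : n < A
  · rw [revAt_le (by omega), pad, pad, dif_pos hn, dif_pos (by omega)]
    simp only [crev, Fin.rev, Complex.star_def]
    congr 3
    omega
  · have hrev : A ≤ revAt (A - 1) n := by
      rcases le_or_gt n (A - 1) with h | h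
      · rw [revAt_le h]; omega
      · rw [revAt_eq_self_of_lt h]; omega
    rw [pad, pad, dif_neg hn, dif_neg (by omega), map_zero]

lemma toPoly_crev_conv (f : Fin A → ℂ) (g : Fin B → ℂ) (hA : 0 < A) (hB : 0 < B) :
    toPoly (crev (conv f g)) = toPoly (crev f) * toPoly (crev g) := by
  rw [toPoly_crev, toPoly_conv, Polynomial.map_mul, show A + B - 1 - 1 = A - 1 + (B - 1) by omega,
    reflect_mul _ _ (natDegree_map_le.trans (natDegree_toPoly_le f))
      (natDegree_map_le.trans (natDegree_toPoly_le g)), toPoly_crev, toPoly_crev]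

theorem acorr_conv (f : Fin A → ℂ) (g : Fin B → ℂ) (hA : 0 < A) (hB : 0 < B) :
    acorr (conv f g) = aconv (acorr f) (acorr g) := by
  rw [acorr_eq_coeff, acorr_eq_coeff, acorr_eq_coeff, aconv_coeff, toPoly_conv,
    toPoly_crev_conv f g hA hB, mul_mul_mul_comm]

lemma acorr_eq_zero (f : Fin A → ℂ) {n : ℕ} (hn : 2 * A - 1 ≤ n) : acorr f n = 0 :=
  aconv_pad_eq_zero f (crev f) (by omega)

lemma acorr_sub_one_eq_sum_normSq (f : Fin A → ℂ) :
    acorr f (A - 1) = ∑ i, (normSq (f i) : ℂ) := by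
  cases A with
  | zero => simp [acorr, aconv, pad]
  | succ A =>
    simp only [acorr, aconv, Nat.add_sub_cancel, ← Fin.sum_univ_eq_sum_range]
    refine sum_congr rfl fun i _ => ?_
    have hrev : (⟨A - i, by omega⟩ : Fin (A + 1)).rev = i := Fin.ext (by simp; omega)
    rw [pad, pad, dif_pos i.2, dif_pos (by omega), crev, hrev, ← mul_conj]
    rfl

lemma acorr_sub_one_ne_zero {f : Fin A → ℂ} {i : Fin A} (hi : f i ≠ 0) : acorr f (A - 1) ≠ 0 := by
  rw [acorr_sub_one_eq_sum_normSq, ← ofReal_sum, ofReal_ne_zero]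
  exact (sum_pos' (fun j _ => normSq_nonneg (f j)) ⟨i, mem_univ i, normSq_pos.mpr hi⟩).ne'

end

lemma aconv_huffman_left {L : ℕ} (hL : 2 ≤ L) (E : ℂ) (a g : ℕ → ℂ)
    (ha : ∀ k, a k =
      if k = 0 then -1 else if k = L - 1 then E else if k = 2 * L - 2 then -1 else 0) (k : ℕ) :
    aconv a g k = -g k + (if L - 1 ≤ k then E * g (k - (L - 1)) else 0) +
      (if 2 * L - 2 ≤ k then -g (k - (2 * L - 2)) else 0) := by
  have hspikes : a = (fun l => if l = 0 then -1 else 0) + (fun l => if l = L - 1 then E else 0) +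
      (fun l => if l = 2 * L - 2 then -1 else 0) := by
    funext l
    rw [ha, Pi.add_apply, Pi.add_apply]
    split_ifs <;> first | omega | simp
  rw [hspikes, aconv_add_left, aconv_add_left]
  simp only [Pi.add_apply, aconv_spike_left]
  simp

lemma eq_sqrt_sum_norm_sq_div {ι : Type*} {E : ℝ} (hE : 0 ≤ E) (s : Finset ι) (w : ι → ℂ)
    (hw : ∃ j ∈ s, w j ≠ 0) :
    E = √(∑ j ∈ s, ‖(E : ℂ) * w j‖ ^ 2) / √(∑ j ∈ s, ‖w j‖ ^ 2) := by
  obtain ⟨j, hj, hwj⟩ := hw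
  have hpos : 0 < ∑ j ∈ s, ‖w j‖ ^ 2 :=
    sum_pos' (fun _ _ => sq_nonneg _) ⟨j, hj, by positivity⟩
  simp only [norm_mul, Complex.norm_real, Real.norm_of_nonneg hE, mul_pow, ← mul_sum]
  rw [Real.sqrt_mul (sq_nonneg E), Real.sqrt_sq hE, mul_div_assoc,
    div_self (Real.sqrt_ne_zero'.mpr hpos), mul_one]

theorem stmt12 {L K M : ℕ} (hK : 1 ≤ K) (hLK : L = 2 * K + M)
    (E : ℝ) (hE : 2 < E) (x : Fin L → ℂ) (h : Fin K → ℂ)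
    (hx : ∀ k : ℕ, acorr x k =
      if k = 0 then -1 else if k = L - 1 then (E : ℂ) else if k = 2 * L - 2 then -1 else 0)
    (h0 : h ⟨0, by omega⟩ ≠ 0) :
    let ay : ℕ → ℂ :=
      acorr (fun j : Fin (L + K - 1) => aconv (pad x) (pad h) (j : ℕ))
    (∀ k : ℕ, ay k =
        (if k ≤ 2 * K - 2 then -(acorr h k) else 0) +
        (if L - 1 ≤ k ∧ k ≤ L + 2 * K - 3 then (E : ℂ) * acorr h (k - (L - 1)) else 0) +
        (if 2 * L - 2 ≤ k then -(acorr h (k - (2 * L - 2))) else 0)) ∧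
    (∀ k ≤ 2 * K - 2, acorr h k = -(ay k)) ∧
    E = Real.sqrt (∑ j ∈ Finset.range (2 * K - 1), ‖ay (L - 1 + j)‖ ^ 2) /
        Real.sqrt (∑ j ∈ Finset.range (2 * K - 1), ‖ay j‖ ^ 2) := by
  intro ay
  have hay (k : ℕ) : ay k = -acorr h k +
      (if L - 1 ≤ k then (E : ℂ) * acorr h (k - (L - 1)) else 0) +
      (if 2 * L - 2 ≤ k then -acorr h (k - (2 * L - 2)) else 0) := by
    change acorr (conv x h) k = _
    rw [acorr_conv x h (by omega) hK]
    exact aconv_huffman_left (by omega) _ _ _ hx k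
  have hlow (k : ℕ) (hk : k ≤ 2 * K - 2) : ay k = -acorr h k := by
    rw [hay, if_neg (by omega), if_neg (by omega), add_zero, add_zero]
  have hmid (j : ℕ) (hj : j ≤ 2 * K - 2) : ay (L - 1 + j) = E * acorr h j := by
    rw [hay, acorr_eq_zero h (by omega), if_pos (by omega), if_neg (by omega),
      Nat.add_sub_cancel_left, neg_zero, zero_add, add_zero]
  refine ⟨fun k => ?_, fun k hk => by rw [hlow k hk, neg_neg], ?_⟩
  · rw [hay]
    congr 2
    · split_ifs with hk
      · rfl
      · rw [acorr_eq_zero h (by omega), neg_zero]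
    · split_ifs <;> first | rfl | omega | rw [acorr_eq_zero h (by omega), mul_zero]
  · refine (eq_sqrt_sum_norm_sq_div (by linarith) (range (2 * K - 1)) (acorr h)
      ⟨K - 1, mem_range.mpr (by omega), acorr_sub_one_ne_zero h0⟩).trans ?_
    congr 2 <;> refine sum_congr rfl fun j hj => ?_
    · rw [hmid j (by rw [mem_range] at hj; omega)]
    · rw [hlow j (by rw [mem_range] at hj; omega), norm_neg]
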